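/- arXiv:2510.21397 — 3 statements merged into one kernel-verified Lean document; each statement's English description precedes it below -/
import Mathlib

section
/- Fix ρ > 0, γ ∈ ℝ, θ > 0, η > 0, an integer N ≥ 1, μ, ν ∈ ℝ, and real constants ν̂, ξ̂, ĝ. Set K = 1 + θ + η/N, a = K/ρ, b = η/ρ, and c = −ρ⁻¹ log K + ρ⁻¹ log ρ − ρ⁻¹ + γ K ρ⁻² − K ρ⁻² (ν² + μ²)/2 + ρ⁻² η ĝ, and define w : (0,∞) × (0,∞) → ℝ by w(q, q̂) = a log q + b log q̂ + c. Then for all q > 0 and q̂ > 0: ρ·w(q,q̂) − ((ν̂² + ξ̂²)/2)·q̂²·∂²w/∂q̂²(q,q̂) − ((ν² + μ²)/2)·q²·∂²w/∂q²(q,q̂) − (ĝ + (ν̂² + ξ̂²)/2)·q̂·∂w/∂q̂(q,q̂) − γ·q·∂w/∂q(q,q̂) − sup_{α > 0} [ log α + K·log q + η·log q̂ − α·q·∂w/∂q(q,q̂) ] − ν·ν̂·q·q̂·∂²w/∂q∂q̂(q,q̂) = 0, where all partial derivatives are classical derivatives (and they all exist, w being C²). -/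
open Real

/-- The explicit logarithmic function `w(q,q̂) = a log q + b log q̂ + c` is a classical
solution of the HJB equation of player `i` in the `N`-player environmental game. -/
theorem stmt_2 (ρ γ θ η μ ν νh ξh gh : ℝ)
    (hρ : 0 < ρ) (hθ : 0 < θ) (hη : 0 < η)
    (N : ℕ) (hN : 1 ≤ N)
    (K a b c : ℝ)
    (hK : K = 1 + θ + η / N)
    (ha : a = K / ρ)
    (hb : b = η / ρ)
    (hc : c = -ρ⁻¹ * Real.log K + ρ⁻¹ * Real.log ρ - ρ⁻¹
        + γ * K * ρ⁻¹ ^ 2 - K * ρ⁻¹ ^ 2 * (ν ^ 2 + μ ^ 2) / 2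
        + ρ⁻¹ ^ 2 * η * gh)
    (w : ℝ → ℝ → ℝ)
    (hw : ∀ q qh : ℝ, w q qh = a * Real.log q + b * Real.log qh + c) :
    ∀ q qh : ℝ, 0 < q → 0 < qh →
      ρ * w q qh
        - ((νh ^ 2 + ξh ^ 2) / 2) * qh ^ 2 *
            deriv (fun y => deriv (fun y' => w q y') y) qh
        - ((ν ^ 2 + μ ^ 2) / 2) * q ^ 2 *
            deriv (fun x => deriv (fun x' => w x' qh) x) q
        - (gh + (νh ^ 2 + ξh ^ 2) / 2) * qh * deriv (fun y => w q y) qh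
        - γ * q * deriv (fun x => w x qh) q
        - sSup ((fun α : ℝ =>
            Real.log α + K * Real.log q + η * Real.log qh
              - α * q * deriv (fun x => w x qh) q) '' Set.Ioi (0 : ℝ))
        - ν * νh * q * qh * deriv (fun y => deriv (fun x => w x y) q) qh = 0 := by
  intro q qh hq hqh
  have hN0 : (0:ℝ) < N := by exact_mod_cast Nat.lt_of_lt_of_le Nat.zero_lt_one hN
  have hK0 : 0 < K := by rw [hK]; positivity
  have ha0 : 0 < a := by rw [ha]; positivity
  -- derivative in the first variable, for any second argument
  have hdq : ∀ (y x : ℝ), x ≠ 0 → HasDerivAt (fun x' => w x' y) (a * x⁻¹) x := by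
    intro y x hx
    have h := (((Real.hasDerivAt_log hx).const_mul a).add_const
        (b * Real.log y)).add_const c
    simpa only [hw] using h
  -- derivative in the second variable
  have hdqh : ∀ (y : ℝ), y ≠ 0 → HasDerivAt (fun y' => w q y') (b * y⁻¹) y := by
    intro y hy
    have h := ((((Real.hasDerivAt_log hy).const_mul b).const_add
        (a * Real.log q))).add_const c
    simpa only [hw] using h
  have hderiv_q : deriv (fun x => w x qh) q = a * q⁻¹ := (hdq qh q hq.ne').deriv
  have hderiv_qh : deriv (fun y => w q y) qh = b * qh⁻¹ := (hdqh qh hqh.ne').deriv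
  -- second derivatives
  have h2q : deriv (fun x => deriv (fun x' => w x' qh) x) q = a * (-(q^2)⁻¹) := by
    have hev : (fun x => deriv (fun x' => w x' qh) x) =ᶠ[nhds q] (fun x => a * x⁻¹) := by
      filter_upwards [isOpen_Ioi.mem_nhds hq] with x hx
      exact (hdq qh x (ne_of_gt hx)).deriv
    rw [hev.deriv_eq]
    exact ((hasDerivAt_inv hq.ne').const_mul a).deriv
  have h2qh : deriv (fun y => deriv (fun y' => w q y') y) qh = b * (-(qh^2)⁻¹) := by
    have hev : (fun y => deriv (fun y' => w q y') y) =ᶠ[nhds qh] (fun y => b * y⁻¹) := by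
      filter_upwards [isOpen_Ioi.mem_nhds hqh] with y hy
      exact (hdqh y (ne_of_gt hy)).deriv
    rw [hev.deriv_eq]
    exact ((hasDerivAt_inv hqh.ne').const_mul b).deriv
  have hmix : deriv (fun y => deriv (fun x => w x y) q) qh = 0 := by
    have : (fun y : ℝ => deriv (fun x => w x y) q) = fun _ => a * q⁻¹ := by
      funext y
      exact (hdq y q hq.ne').deriv
    rw [this, deriv_const]
  -- the supremum
  have hsup : sSup ((fun α : ℝ =>
      Real.log α + K * Real.log q + η * Real.log qh
        - α * q * deriv (fun x => w x qh) q) '' Set.Ioi (0 : ℝ))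
      = (-Real.log a - 1) + K * Real.log q + η * Real.log qh := by
    rw [hderiv_q]
    apply IsGreatest.csSup_eq
    constructor
    · refine ⟨a⁻¹, Set.mem_Ioi.mpr (inv_pos.mpr ha0), ?_⟩
      dsimp only
      rw [Real.log_inv]
      have h1 : a⁻¹ * q * (a * q⁻¹) = 1 := by
        field_simp
      rw [h1]; ring
    · rintro z ⟨α, hα, rfl⟩
      have hα0 : 0 < α := hα
      have hle : Real.log (a * α) ≤ a * α - 1 :=
        Real.log_le_sub_one_of_pos (mul_pos ha0 hα0)
      rw [Real.log_mul ha0.ne' hα0.ne'] at hle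
      have h1 : α * q * (a * q⁻¹) = a * α := by field_simp
      dsimp only
      rw [h1]
      linarith
  have hloga : Real.log a = Real.log K - Real.log ρ := by
    rw [ha, Real.log_div hK0.ne' hρ.ne']
  rw [hw, hderiv_q, hderiv_qh, h2q, h2qh, hmix]
  rw [hderiv_q] at hsup
  rw [hsup, hloga, ha, hb, hc]
  have hρa : ρ * (K / ρ) = K := by field_simp
  have hρb : ρ * (η / ρ) = η := by field_simp
  field_simp
  ring
end

section
/- Let ρ > 0 and let N ≥ 2 be an integer. Define P(θ, η) = (1/ρ) [ u − log u − 1 ] with u = u(θ,η) = (1+θ+η)/(1+θ+η/N), for θ > 0 and η > 0. Then: (i) for every fixed η > 0, the map θ ↦ P(θ,η) is strictly decreasing on (0,∞); (ii) for every fixed θ > 0, the map η ↦ P(θ,η) is strictly increasing on (0,∞). -/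
/-!
`P = (1/ρ) g(u)` with `g x = x - log x - 1`, which is strictly increasing on `[1, ∞)`, and
`u = (a + η) / (a + η / N)` with `a = 1 + θ`. Since `N > 1` we have `u > 1`, and `u` falls as `a`
grows (the relative weight of `η` shrinks) and rises with `η`. Composing gives both monotonicities.
-/

open Real Set

theorem Real.strictMonoOn_sub_log_sub_one :
    StrictMonoOn (fun x : ℝ => x - log x - 1) (Ici 1) := by
  intro a (ha : 1 ≤ a) b (hb : 1 ≤ b) hab
  have ha₀ : 0 < a := by linarith
  have hlog : log b - log a < b - a :=
    calc log b - log a = log (b / a) := (log_div (by positivity) ha₀.ne').symm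
      _ < b / a - 1 := log_lt_sub_one_of_pos (by positivity) ((one_lt_div ha₀).2 hab).ne'
      _ = (b - a) / a := by field_simp
      _ ≤ b - a := div_le_self (by linarith) ha
  dsimp only
  linarith

section ratio

variable {d : ℝ}

theorem one_lt_add_div_add_div {a η : ℝ} (ha : 0 < a) (hη : 0 < η) (hd : 1 < d) :
    1 < (a + η) / (a + η / d) := by
  have : η / d < η := div_lt_self hη hd
  rw [one_lt_div (by positivity)]
  linarith

theorem strictAntiOn_add_div_add_div {η : ℝ} (hη : 0 < η) (hd : 1 < d) :
    StrictAntiOn (fun a : ℝ => (a + η) / (a + η / d)) (Ioi 0) := by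
  intro a (ha : 0 < a) b (hb : 0 < b) hab
  have : η / d < η := div_lt_self hη hd
  rw [div_lt_div_iff₀ (by positivity) (by positivity)]
  nlinarith [mul_pos (sub_pos.2 hab) (sub_pos.2 this)]

theorem strictMonoOn_add_div_add_div {a : ℝ} (ha : 0 < a) (hd : 1 < d) :
    StrictMonoOn (fun η : ℝ => (a + η) / (a + η / d)) (Ici 0) := by
  intro η (hη : 0 ≤ η) ξ (hξ : 0 ≤ ξ) hηξ
  have hd₀ : 0 < d := by linarith
  have : ξ / d - η / d < ξ - η := by rw [← sub_div]; exact div_lt_self (by linarith) hd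
  rw [div_lt_div_iff₀ (by positivity) (by positivity)]
  have hcross : η * (ξ / d) = ξ * (η / d) := by ring
  nlinarith [mul_lt_mul_of_pos_left this ha]

end ratio

/-- Monotonicity of the Price of Anarchy `P(θ,η) = (1/ρ)[u − log u − 1]`,
`u = (1+θ+η)/(1+θ+η/N)`: strictly decreasing in `θ`, strictly increasing in `η`. -/
theorem stmt_11 (ρ : ℝ) (hρ : 0 < ρ) (N : ℕ) (hN : 2 ≤ N)
    (P : ℝ → ℝ → ℝ)
    (hP : ∀ θ η : ℝ, P θ η = (1 / ρ) * ((1 + θ + η) / (1 + θ + η / N)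
        - Real.log ((1 + θ + η) / (1 + θ + η / N)) - 1)) :
    (∀ η : ℝ, 0 < η → StrictAntiOn (fun θ : ℝ => P θ η) (Set.Ioi 0)) ∧
    (∀ θ : ℝ, 0 < θ → StrictMonoOn (fun η : ℝ => P θ η) (Set.Ioi 0)) := by
  have hN₁ : (1 : ℝ) < N := by exact_mod_cast hN
  have hu : ∀ θ η : ℝ, 0 < θ → 0 < η → (1 + θ + η) / (1 + θ + η / N) ∈ Ici (1 : ℝ) :=
    fun θ η hθ hη => (one_lt_add_div_add_div (by linarith) hη hN₁).le
  constructor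
  · intro η hη θ₁ (hθ₁ : 0 < θ₁) θ₂ (hθ₂ : 0 < θ₂) hθ
    simp only [hP]
    refine mul_lt_mul_of_pos_left (strictMonoOn_sub_log_sub_one (hu _ _ hθ₂ hη) (hu _ _ hθ₁ hη)
      (strictAntiOn_add_div_add_div hη hN₁ ?_ ?_ (by linarith))) (by positivity)
    all_goals simp only [mem_Ioi]; linarith
  · intro θ hθ η₁ (hη₁ : 0 < η₁) η₂ (hη₂ : 0 < η₂) hη
    simp only [hP]
    exact mul_lt_mul_of_pos_left (strictMonoOn_sub_log_sub_one (hu _ _ hθ hη₁) (hu _ _ hθ hη₂)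
      (strictMonoOn_add_div_add_div (by linarith) hN₁ hη₁.le hη₂.le hη)) (by positivity)
end

section
/- Let ρ > 0, let N ≥ 1 be an integer, let θ, η : {1,…,N} → ℝ with θ_i > 0 and η_j > 0 for all i, j, and set η̄ = (1/N) ∑_{j=1}^N η_j. For each i define the tax rate τ_i = (η̄ − η_i/N)/ρ. Then τ_i ≥ 0 and 1 / ( τ_i + (1 + θ_i + η_i/N)/ρ ) = ρ / (1 + θ_i + η̄); that is, the tax-distorted closed-loop consumption rate α_i^{CL}(τ_i) coincides with the social planner rate α_i^{SP}. -/
/-!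
The tax satisfies `ρ τ_i = (1/N) ∑_{j ≠ i} η_j`, the damage player `i` inflicts on the others, so it is
nonnegative; added to the private cost `η_i/N` it restores the full social cost `η̄`, and both
consumption rates become `ρ/(1 + θ_i + η̄)`.
-/

open Finset

theorem one_div_mul_sum_sub_div_eq_sum_erase_div {ι K : Type*} [Fintype ι] [DecidableEq ι]
    [Field K] (f : ι → K) (n : K) (i : ι) :
    1 / n * ∑ j, f j - f i / n = (∑ j ∈ univ.erase i, f j) / n := by
  rw [← add_sum_erase _ _ (mem_univ i)]
  ring

theorem stmt_12_general (ρ : ℝ) (hρ : 0 < ρ) (N : ℕ)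
    (θ η : Fin N → ℝ) (hη : ∀ j, 0 < η j) :
    ∀ i : Fin N,
      0 ≤ ((1 / N : ℝ) * ∑ j, η j - η i / N) / ρ ∧
      1 / (((1 / N : ℝ) * ∑ j, η j - η i / N) / ρ + (1 + θ i + η i / N) / ρ)
        = ρ / (1 + θ i + (1 / N : ℝ) * ∑ j, η j) := by
  intro i
  refine ⟨div_nonneg ?_ hρ.le, ?_⟩
  · rw [one_div_mul_sum_sub_div_eq_sum_erase_div]
    exact div_nonneg (sum_nonneg fun j _ => (hη j).le) N.cast_nonneg
  · rw [← add_div, one_div_div]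
    congr 1
    ring

/-- Pigouvian tax: with `τ_i = (η̄ − η_i/N)/ρ`, the tax is nonnegative and the
tax-distorted closed-loop rate `1/(τ_i + (1+θ_i+η_i/N)/ρ)` coincides with the
social planner rate `ρ/(1+θ_i+η̄)`. -/
theorem stmt_12 (ρ : ℝ) (hρ : 0 < ρ) (N : ℕ) (hN : 1 ≤ N)
    (θ η : Fin N → ℝ) (hθ : ∀ i, 0 < θ i) (hη : ∀ j, 0 < η j) :
    ∀ i : Fin N,
      0 ≤ ((1 / N : ℝ) * ∑ j, η j - η i / N) / ρ ∧
      1 / (((1 / N : ℝ) * ∑ j, η j - η i / N) / ρ + (1 + θ i + η i / N) / ρ)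
        = ρ / (1 + θ i + (1 / N : ℝ) * ∑ j, η j) :=
  stmt_12_general ρ hρ N θ η hη
end
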